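/- Let p ∈ ℝ satisfy p⁵ = −45. Define, for τ ∈ (−1,∞): G₂(τ) = −(1/30)·p³·(1+τ)^(−2/5), G₄(τ) = (3/20)·p·(1+τ)^(−4/5), G₅(τ) = (1/5)·(1+τ)^(−1), G₇(τ) = −(1/50)·p³·(1+τ)^(−7/5). Then for every τ ∈ (−1,∞) the following derivative identities hold: G₂'(τ) = G₂(τ)G₅(τ) − G₇(τ); G₄'(τ) = 2(G₂(τ)G₇(τ) − G₄(τ)G₅(τ)); G₅'(τ) = G₅(τ)² + 14G₂(τ)⁵ − 28G₂(τ)³G₄(τ) − 18G₂(τ)G₄(τ)²; G₇'(τ) = −G₅(τ)G₇(τ) + 21G₂(τ)⁶ + 35G₂(τ)⁴G₄(τ) − 21G₂(τ)²G₄(τ)² − 3G₄(τ)³. That is, (G₂,G₄,G₅,G₇) is a solution of the dynamical system (II) with parameters y₄ = y₆ = y₈ = y₁₀ = 0. -/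

import Mathlib

/-! With `u = (1 + τ) ^ (-1/5)` every `Gᵢ` is a constant multiple of `uⁱ`, and differentiating
`c (1 + τ) ^ (-n/5)` gives `-(n/5) c uⁿ⁺⁵`. So both sides of each equation of the system are
multiples of the same power of `u` (`u⁷, u⁹, u¹⁰, u¹²`), and the four equations reduce to
identities between polynomials in `p`, which hold modulo `p⁵ + 45`. -/

noncomputable section

def G2 (p τ : ℝ) : ℝ := -(1 / 30) * p ^ 3 * (1 + τ) ^ (-(2 : ℝ) / 5)
def G4 (p τ : ℝ) : ℝ := (3 / 20) * p * (1 + τ) ^ (-(4 : ℝ) / 5)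
def G5 (p τ : ℝ) : ℝ := (1 / 5) * (1 + τ) ^ (-(1 : ℝ))
def G7 (p τ : ℝ) : ℝ := -(1 / 50) * p ^ 3 * (1 + τ) ^ (-(7 : ℝ) / 5)

def invFifthRoot (τ : ℝ) : ℝ := (1 + τ) ^ (-(1 : ℝ) / 5)

variable {τ : ℝ}

lemma one_add_rpow_neg_div_five (hτ : 0 < 1 + τ) (n : ℕ) :
    (1 + τ) ^ (-(n : ℝ) / 5) = invFifthRoot τ ^ n := by
  rw [invFifthRoot, ← Real.rpow_mul_natCast hτ.le]
  ring_nf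

lemma hasDerivAt_const_mul_one_add_rpow_neg_div_five (c : ℝ) (n : ℕ) (hτ : 0 < 1 + τ) :
    HasDerivAt (fun t => c * (1 + t) ^ (-(n : ℝ) / 5))
      (-(n : ℝ) / 5 * c * invFifthRoot τ ^ (n + 5)) τ := by
  have hpow := (Real.hasDerivAt_rpow_const (p := -(n : ℝ) / 5) (Or.inl hτ.ne')).comp τ
    ((hasDerivAt_id τ).const_add 1)
  refine (hpow.const_mul c).congr_deriv ?_
  rw [show -(n : ℝ) / 5 - 1 = -((n + 5 : ℕ) : ℝ) / 5 by push_cast; ring,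
    one_add_rpow_neg_div_five hτ]
  ring

lemma G2_eq (p : ℝ) (hτ : 0 < 1 + τ) : G2 p τ = -(1 / 30) * p ^ 3 * invFifthRoot τ ^ 2 := by
  rw [G2, ← one_add_rpow_neg_div_five hτ]; norm_num

lemma G4_eq (p : ℝ) (hτ : 0 < 1 + τ) : G4 p τ = (3 / 20) * p * invFifthRoot τ ^ 4 := by
  rw [G4, ← one_add_rpow_neg_div_five hτ]; norm_num

lemma G5_eq (p : ℝ) (hτ : 0 < 1 + τ) : G5 p τ = (1 / 5) * invFifthRoot τ ^ 5 := by
  rw [G5, ← one_add_rpow_neg_div_five hτ]; norm_num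

lemma G7_eq (p : ℝ) (hτ : 0 < 1 + τ) : G7 p τ = -(1 / 50) * p ^ 3 * invFifthRoot τ ^ 7 := by
  rw [G7, ← one_add_rpow_neg_div_five hτ]; norm_num

lemma hasDerivAt_G2 (p : ℝ) (hτ : 0 < 1 + τ) :
    HasDerivAt (G2 p) ((1 / 75) * p ^ 3 * invFifthRoot τ ^ 7) τ := by
  convert hasDerivAt_const_mul_one_add_rpow_neg_div_five (-(1 / 30) * p ^ 3) 2 hτ using 1
  · ext t; simp only [G2]; norm_num
  · ring

lemma hasDerivAt_G4 (p : ℝ) (hτ : 0 < 1 + τ) :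
    HasDerivAt (G4 p) (-(3 / 25) * p * invFifthRoot τ ^ 9) τ := by
  convert hasDerivAt_const_mul_one_add_rpow_neg_div_five ((3 / 20) * p) 4 hτ using 1
  · ext t; simp only [G4]; norm_num
  · ring

lemma hasDerivAt_G5 (p : ℝ) (hτ : 0 < 1 + τ) :
    HasDerivAt (G5 p) (-(1 / 5) * invFifthRoot τ ^ 10) τ := by
  convert hasDerivAt_const_mul_one_add_rpow_neg_div_five (1 / 5) 5 hτ using 1
  · ext t; simp only [G5]; norm_num
  · ring

lemma hasDerivAt_G7 (p : ℝ) (hτ : 0 < 1 + τ) :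
    HasDerivAt (G7 p) ((7 / 250) * p ^ 3 * invFifthRoot τ ^ 12) τ := by
  convert hasDerivAt_const_mul_one_add_rpow_neg_div_five (-(1 / 50) * p ^ 3) 7 hτ using 1
  · ext t; simp only [G7]; norm_num
  · ring

/-- For `p ∈ ℝ` with `p⁵ = −45`, the functions `G₂, G₄, G₅, G₇` above solve the
dynamical system (II) with parameters `y₄ = y₆ = y₈ = y₁₀ = 0` on `(−1,∞)`. -/
theorem statement16 (p : ℝ) (hp : p ^ 5 = -45) :
    ∀ τ ∈ Set.Ioi (-1 : ℝ),
      HasDerivAt (G2 p) (G2 p τ * G5 p τ - G7 p τ) τ ∧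
      HasDerivAt (G4 p) (2 * (G2 p τ * G7 p τ - G4 p τ * G5 p τ)) τ ∧
      HasDerivAt (G5 p)
        ((G5 p τ) ^ 2 + 14 * (G2 p τ) ^ 5 - 28 * (G2 p τ) ^ 3 * G4 p τ
          - 18 * G2 p τ * (G4 p τ) ^ 2) τ ∧
      HasDerivAt (G7 p)
        (-(G5 p τ) * G7 p τ + 21 * (G2 p τ) ^ 6 + 35 * (G2 p τ) ^ 4 * G4 p τ
          - 21 * (G2 p τ) ^ 2 * (G4 p τ) ^ 2 - 3 * (G4 p τ) ^ 3) τ := by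
  intro τ hτ
  have hτ₀ : 0 < 1 + τ := by linarith [Set.mem_Ioi.mp hτ]
  simp only [G2_eq p hτ₀, G4_eq p hτ₀, G5_eq p hτ₀, G7_eq p hτ₀]
  set u := invFifthRoot τ
  refine ⟨(hasDerivAt_G2 p hτ₀).congr_deriv ?_, (hasDerivAt_G4 p hτ₀).congr_deriv ?_,
    (hasDerivAt_G5 p hτ₀).congr_deriv ?_, (hasDerivAt_G7 p hτ₀).congr_deriv ?_⟩
  · ring
  · linear_combination -(1 / 750) * p * u ^ 9 * hp
  · linear_combination u ^ 10 * (7 / 12150000 * p ^ 10 - 49 / 270000 * p ^ 5 - 2 / 375) * hp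
  · linear_combination
      p ^ 3 * u ^ 12 * (-(7 / 243000000) * p ^ 10 - 7 / 1350000 * p ^ 5 + 91 / 120000) * hp

end
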